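/- arXiv:1905.07365 — 4 statements merged into one kernel-verified Lean document; each statement's English description precedes it below -/
import Mathlib

section
/- For every pair (A,B) of disjoint, nonempty zones over the clock set C, there exists an interpolant for (A,B) that is the set of valuations satisfying a finite set of at most ⌊(|C|+1)/2⌋ atomic constraints. -/
/-!
Put the constraints of `A`, the constraints `0 - c ≤ 0` and the constraints of `B` into one
graph on `C ∪ {0}`, the constraint `x - y ≺ k` being an edge from `x` to `y` of weight `(k, ≺)`.
Were every cycle nonnegative, shortest-path distances (with a strict bound `(k, <)` read as
`k - ε`, `ε` small) would give a valuation in `A ∩ B`. So some cycle is negative, and among the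
negative cycles whose edges are constraints valid on `A` or valid on `B` we take a shortest one.
It is simple, hence has at most `|C| + 1` edges, and two consecutive edges valid on `A` would
add up to one such edge and shorten it. As `A ≠ ∅` not all its edges are valid on `A`, so at
most half of them are. These edges form the interpolant: a valuation satisfying them and lying
in `B` satisfies every edge of the cycle, whose bounds add up to a negative bound.
-/

/-- A bound `(k, ≺)`: an integer `k` together with a strictness flag
(`true` codes `≤`, `false` codes `<`), ordered lexicographically,
so that `(k, <) < (k, ≤) < (k+1, <)`. -/
abbrev Bnd : Type := Lex (ℤ × Bool)

/-- Addition of bounds: `(k,≺) + (k',≺')` is `(k+k', ≺'')` where `≺''` is `≤`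
iff both `≺` and `≺'` are `≤`. -/
instance : Add Bnd :=
  ⟨fun a b => toLex ((ofLex a).1 + (ofLex b).1, (ofLex a).2 && (ofLex b).2)⟩

/-- The zero bound is `(0, ≤)`. -/
instance : Zero Bnd := ⟨toLex (0, true)⟩

instance : AddCommMonoid Bnd where
  toAdd := instAddBnd
  toZero := instZeroBnd
  nsmul := nsmulRec
  add_assoc a b c := by
    change toLex (((ofLex a).1 + (ofLex b).1) + (ofLex c).1,
        (((ofLex a).2 && (ofLex b).2) && (ofLex c).2)) =
      toLex ((ofLex a).1 + ((ofLex b).1 + (ofLex c).1),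
        ((ofLex a).2 && ((ofLex b).2 && (ofLex c).2)))
    rw [add_assoc, Bool.and_assoc]
  zero_add a := by
    change toLex ((0 : ℤ) + (ofLex a).1, (true && (ofLex a).2)) = a
    simp
  add_zero a := by
    change toLex ((ofLex a).1 + (0 : ℤ), ((ofLex a).2 && true)) = a
    simp
  add_comm a b := by
    change toLex ((ofLex a).1 + (ofLex b).1, ((ofLex a).2 && (ofLex b).2)) =
      toLex ((ofLex b).1 + (ofLex a).1, ((ofLex b).2 && (ofLex a).2))
    rw [add_comm, Bool.and_comm]

/-- `satB d b` says that `d ≺ k`, where `b = (k, ≺)`. -/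
def satB (d : ℝ) (b : Bnd) : Prop :=
  if (ofLex b).2 then d ≤ ((ofLex b).1 : ℝ) else d < ((ofLex b).1 : ℝ)

variable {C : Type*}

/-- Extended valuation on `C0 = C ∪ {0}`: the special clock `0` is `none`. -/
def val0 (v : C → ℝ) : Option C → ℝ := fun x => x.elim 0 v

/-- The zone defined by a finite set of atomic constraints `x - y ≺ k`. -/
def zoneOf (G : Finset (Option C × Option C × Bnd)) : Set (C → ℝ) :=
  {v | (∀ c, 0 ≤ v c) ∧ ∀ g ∈ G, satB (val0 v g.1 - val0 v g.2.1) g.2.2}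

/-- A zone: a set of (nonnegative) clock valuations defined by a finite set of
atomic constraints. -/
def IsZone (Z : Set (C → ℝ)) : Prop :=
  ∃ G : Finset (Option C × Option C × Bnd), Z = zoneOf G

namespace Bnd

lemma ofLex_add (a b : Bnd) :
    ofLex (a + b) = ((ofLex a).1 + (ofLex b).1, (ofLex a).2 && (ofLex b).2) := rfl

lemma ofLex_zero : ofLex (0 : Bnd) = (0, true) := rfl

instance : IsOrderedAddMonoid Bnd where
  add_le_add_left a b hab c := by
    rw [Prod.Lex.le_iff] at hab ⊢
    simp only [ofLex_add]
    rcases hab with hlt | ⟨heq, hle⟩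
    · exact Or.inl (by omega)
    · refine Or.inr ⟨by omega, ?_⟩
      revert hle
      cases (ofLex a).2 <;> cases (ofLex b).2 <;> cases (ofLex c).2 <;> decide

lemma satB_zero : satB 0 (0 : Bnd) := by
  simp [satB, ofLex_zero]

lemma satB_add {d e : ℝ} {a b : Bnd} (ha : satB d a) (hb : satB e b) :
    satB (d + e) (a + b) := by
  obtain ⟨⟨k, f⟩, rfl⟩ := toLex.surjective a
  obtain ⟨⟨k', f'⟩, rfl⟩ := toLex.surjective b
  cases f <;> cases f' <;> simp_all [satB, ofLex_add] <;> linarith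

lemma not_satB_zero_of_neg {b : Bnd} (hb : b < 0) : ¬ satB 0 b := by
  obtain ⟨⟨k, f⟩, rfl⟩ := toLex.surjective b
  rw [Prod.Lex.lt_iff, ofLex_zero] at hb
  cases f <;> simp [satB] at hb ⊢ <;> omega

end Bnd

section Walk

variable {V β : Type*}

/-- The edge `(x, y, b)` stands for the constraint `x - y ≺ b`. -/
def IsWalk : V → V → List (V × V × β) → Prop
  | x, y, [] => x = y
  | x, y, e :: l => e.1 = x ∧ IsWalk e.2.1 y l

@[simp] lemma isWalk_nil {x y : V} : IsWalk x y ([] : List (V × V × β)) ↔ x = y := Iff.rfl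

@[simp] lemma isWalk_cons {x y : V} {e : V × V × β} {l : List (V × V × β)} :
    IsWalk x y (e :: l) ↔ e.1 = x ∧ IsWalk e.2.1 y l := Iff.rfl

lemma isWalk_append {x z : V} {l m : List (V × V × β)} :
    IsWalk x z (l ++ m) ↔ ∃ y, IsWalk x y l ∧ IsWalk y z m := by
  induction l generalizing x with
  | nil => simp
  | cons e l ih => simp [ih, and_assoc]

lemma IsWalk.rotate {x : V} {l m : List (V × V × β)} (h : IsWalk x x (l ++ m)) :
    ∃ y, IsWalk y y (m ++ l) := by
  obtain ⟨y, hl, hm⟩ := isWalk_append.1 h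
  exact ⟨y, isWalk_append.2 ⟨x, hm, hl⟩⟩

lemma IsWalk.exists_cycle_of_not_nodup {x y : V} {l : List (V × V × β)} (h : IsWalk x y l)
    (hl : ¬ (l.map Prod.fst).Nodup) :
    ∃ z l₁ c l₂, l = l₁ ++ c ++ l₂ ∧ c ≠ [] ∧ l₂ ≠ [] ∧
      IsWalk x z l₁ ∧ IsWalk z z c ∧ IsWalk z y l₂ := by
  induction l generalizing x with
  | nil => simp at hl
  | cons e t ih =>
    obtain ⟨rfl, ht⟩ := h
    rw [List.map_cons, List.nodup_cons, not_and_or, not_not] at hl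
    rcases hl with hmem | hdup
    · obtain ⟨f, hf, hfe⟩ := List.mem_map.1 hmem
      obtain ⟨t₁, t₂, rfl⟩ := List.append_of_mem hf
      obtain ⟨z, h₁, h₂⟩ := isWalk_append.1 ht
      obtain rfl : z = e.1 := h₂.1.symm.trans hfe
      exact ⟨_, [], e :: t₁, f :: t₂, by simp, by simp, by simp, rfl, ⟨rfl, h₁⟩, h₂⟩
    · obtain ⟨z, l₁, c, l₂, rfl, hc, hl₂, h₁, h₂, h₃⟩ := ih ht hdup
      exact ⟨z, e :: l₁, c, l₂, by simp, hc, hl₂, ⟨rfl, h₁⟩, h₂, h₃⟩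

variable {G : Type*} [AddCommMonoid G]

def weight (w : β → G) (l : List (V × V × β)) : G := (l.map fun e => w e.2.2).sum

@[simp] lemma weight_nil (w : β → G) : weight w ([] : List (V × V × β)) = 0 := rfl

@[simp] lemma weight_cons (w : β → G) (e : V × V × β) (l : List (V × V × β)) :
    weight w (e :: l) = w e.2.2 + weight w l := by
  simp [weight]

@[simp] lemma weight_append (w : β → G) (l m : List (V × V × β)) :
    weight w (l ++ m) = weight w l + weight w m := by
  simp [weight]

lemma IsWalk.merge {x y : V} {l₁ l₂ : List (V × V × G)} {a b : V × V × G}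
    (h : IsWalk x y (l₁ ++ a :: b :: l₂)) :
    a.2.1 = b.1 ∧ IsWalk x y (l₁ ++ (a.1, b.2.1, a.2.2 + b.2.2) :: l₂) := by
  obtain ⟨z, h₁, rfl, hab, h₂⟩ := isWalk_append.1 h
  exact ⟨hab.symm, isWalk_append.2 ⟨_, h₁, rfl, h₂⟩⟩

end Walk

section Telescoping

variable {V : Type*}

lemma satB_trans {p : V → ℝ} {a b : V × V × Bnd} (hab : a.2.1 = b.1)
    (ha : satB (p a.1 - p a.2.1) a.2.2) (hb : satB (p b.1 - p b.2.1) b.2.2) :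
    satB (p a.1 - p b.2.1) (a.2.2 + b.2.2) := by
  convert Bnd.satB_add ha hb using 1
  rw [hab]
  ring

lemma IsWalk.satB_weight {p : V → ℝ} {x y : V} {l : List (V × V × Bnd)} (h : IsWalk x y l)
    (hl : ∀ e ∈ l, satB (p e.1 - p e.2.1) e.2.2) : satB (p x - p y) (weight id l) := by
  induction l generalizing x with
  | nil => simpa [show x = y from h] using Bnd.satB_zero
  | cons e l ih =>
    obtain ⟨rfl, h⟩ := h
    simpa using satB_trans (b := (e.2.1, y, weight id l)) rfl (hl e (by simp))
      (ih h fun f hf => hl f (by simp [hf]))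

lemma IsWalk.weight_nonneg_of_satB {p : V → ℝ} {x : V} {l : List (V × V × Bnd)}
    (h : IsWalk x x l) (hl : ∀ e ∈ l, satB (p e.1 - p e.2.1) e.2.2) : 0 ≤ weight id l :=
  not_lt.1 fun hneg => Bnd.not_satB_zero_of_neg hneg (by simpa using h.satB_weight hl)

end Telescoping

section Potential

variable {V β G : Type*} [AddCommMonoid G] [LinearOrder G] [IsOrderedAddMonoid G]

lemma IsWalk.exists_nodup_weight_le {E : Set (V × V × β)} {w : β → G}
    (hE : ∀ x l, IsWalk x x l → (∀ e ∈ l, e ∈ E) → 0 ≤ weight w l)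
    {x y : V} {l : List (V × V × β)} (h : IsWalk x y l) (hl : ∀ e ∈ l, e ∈ E) :
    ∃ l', IsWalk x y l' ∧ (∀ e ∈ l', e ∈ E) ∧ (l'.map Prod.fst).Nodup ∧
      weight w l' ≤ weight w l := by
  induction hn : l.length using Nat.strong_induction_on generalizing l with
  | _ n ih =>
  by_cases hnd : (l.map Prod.fst).Nodup
  · exact ⟨l, h, hl, hnd, le_rfl⟩
  obtain ⟨z, l₁, c, l₂, rfl, hc, -, h₁, h₂, h₃⟩ := h.exists_cycle_of_not_nodup hnd
  have hlt : (l₁ ++ l₂).length < n := by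
    simp only [← hn, List.length_append]
    have := List.length_pos_iff.2 hc
    omega
  obtain ⟨l', hw', hE', hnd', hle⟩ := ih _ hlt (isWalk_append.2 ⟨z, h₁, h₃⟩)
    (fun e he => hl e (by simp only [List.mem_append] at he ⊢; tauto)) rfl
  have hc₀ : 0 ≤ weight w c := hE z c h₂ fun e he => hl e (by simp [he])
  refine ⟨l', hw', hE', hnd', hle.trans ?_⟩
  simp only [weight_append]
  exact add_le_add_left (le_add_of_nonneg_right hc₀) _

lemma Set.Finite.setOf_list_length_le {α : Type*} {s : Set α} (hs : s.Finite) (n : ℕ) :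
    {l : List α | l.length ≤ n ∧ ∀ a ∈ l, a ∈ s}.Finite := by
  have := hs.to_subtype
  refine ((List.finite_length_le s n).image (List.map Subtype.val)).subset ?_
  rintro l ⟨hn, hl⟩
  lift l to List s using hl
  exact ⟨l, by simpa using hn, rfl⟩

theorem exists_potential_of_forall_cycle_nonneg [Fintype V] {E : Finset (V × V × β)}
    {w : β → G}
    (hE : ∀ x l, IsWalk x x l → (∀ e ∈ l, e ∈ E) → 0 ≤ weight w l) :
    ∃ p : V → G, ∀ e ∈ E, p e.1 ≤ w e.2.2 + p e.2.1 := by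
  let S (x : V) : Set (List (V × V × β)) :=
    {l | (∃ y, IsWalk x y l) ∧ (∀ e ∈ l, e ∈ E) ∧ (l.map Prod.fst).Nodup}
  have hS (x : V) : (S x).Finite := by
    refine (E.finite_toSet.setOf_list_length_le (Fintype.card V)).subset ?_
    rintro l ⟨-, hl, hnd⟩
    exact ⟨by simpa using hnd.length_le_card, hl⟩
  choose m hm hmin using fun x => Set.exists_min_image (S x) (weight w) (hS x)
    ⟨[], ⟨x, rfl⟩, by simp, by simp⟩
  refine ⟨fun x => weight w (m x), fun e he => ?_⟩
  obtain ⟨⟨y, hy⟩, hyE, -⟩ := hm e.2.1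
  obtain ⟨l, hl, hlE, hnd, hle⟩ := IsWalk.exists_nodup_weight_le hE (x := e.1) (y := y)
    (l := e :: m e.2.1) ⟨rfl, hy⟩ (by simpa [he] using hyE)
  calc weight w (m e.1) ≤ weight w l := hmin e.1 l ⟨⟨y, hl⟩, hlE, hnd⟩
    _ ≤ _ := by simpa using hle

end Potential

namespace Bnd

def relax (δ : ℝ) (b : Bnd) : ℝ := (ofLex b).1 - if (ofLex b).2 then 0 else δ

lemma satB_of_le_relax {d δ : ℝ} {b : Bnd} (hδ : 0 < δ) (h : d ≤ relax δ b) : satB d b := by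
  unfold satB
  unfold relax at h
  split_ifs at h ⊢ <;> linarith

lemma relax_add_le {δ δ' : ℝ} (hδ : 0 ≤ δ) (hδ' : 0 ≤ δ') (a b : Bnd) :
    relax (δ + δ') (a + b) ≤ relax δ a + relax δ' b := by
  obtain ⟨⟨k, f⟩, rfl⟩ := toLex.surjective a
  obtain ⟨⟨k', f'⟩, rfl⟩ := toLex.surjective b
  simp only [relax, ofLex_add, ofLex_toLex, Int.cast_add]
  cases f <;> cases f' <;> simp <;> linarith

lemma relax_sum_le {δ : ℝ} (hδ : 0 ≤ δ) (l : List Bnd) :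
    relax (δ * l.length) l.sum ≤ (l.map (relax δ)).sum := by
  induction l with
  | nil => simp [relax, ofLex_zero]
  | cons b l ih =>
    rw [List.length_cons, Nat.cast_succ, mul_add_one, add_comm, List.sum_cons, List.map_cons,
      List.sum_cons]
    exact (relax_add_le hδ (by positivity) b l.sum).trans (by linarith)

lemma relax_nonneg {δ : ℝ} {b : Bnd} (hb : 0 ≤ b) (hδ : δ < 1) : 0 ≤ relax δ b := by
  obtain ⟨⟨k, f⟩, rfl⟩ := toLex.surjective b
  rw [Prod.Lex.le_iff, ofLex_zero] at hb
  simp only [relax, ofLex_toLex] at hb ⊢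
  rcases hb with hpos | ⟨rfl, hweak⟩
  · have : (1 : ℝ) ≤ k := by exact_mod_cast hpos
    cases f <;> simp <;> linarith
  · revert hweak
    cases f <;> simp

end Bnd

section Relaxation

variable {V : Type*}

lemma weight_eq_sum_map {β G : Type*} [AddCommMonoid G] (w : β → G) (l : List (V × V × β)) :
    weight w l = ((l.map fun e => e.2.2).map w).sum := by
  simp [weight, Function.comp_def]

lemma relax_weight_le {ε : ℝ} (hε : 0 ≤ ε) (l : List (V × V × Bnd)) :
    Bnd.relax (ε * l.length) (weight id l) ≤ weight (Bnd.relax ε) l := by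
  simpa [weight_eq_sum_map] using Bnd.relax_sum_le hε (l.map fun e => e.2.2)

lemma IsWalk.weight_relax_nonneg [Fintype V] {E : Set (V × V × Bnd)}
    (hE : ∀ x l, IsWalk x x l → (∀ e ∈ l, e ∈ E) → 0 ≤ weight id l) {ε : ℝ} (hε : 0 ≤ ε)
    (hεV : ε * Fintype.card V < 1) {x : V} {l : List (V × V × Bnd)} (h : IsWalk x x l)
    (hl : ∀ e ∈ l, e ∈ E) : 0 ≤ weight (Bnd.relax ε) l := by
  induction hn : l.length using Nat.strong_induction_on generalizing x l with
  | _ n ih =>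
  by_cases hnd : (l.map Prod.fst).Nodup
  · have hV : (l.length : ℝ) ≤ Fintype.card V := by
      exact_mod_cast (by simpa using hnd.length_le_card)
    have hlen : ε * l.length < 1 := (mul_le_mul_of_nonneg_left hV hε).trans_lt hεV
    exact (Bnd.relax_nonneg (hE x l h hl) hlen).trans (relax_weight_le hε l)
  obtain ⟨z, l₁, c, l₂, rfl, hc, hl₂, h₁, h₂, h₃⟩ := h.exists_cycle_of_not_nodup hnd
  have hcE : ∀ e ∈ c, e ∈ E := fun e he => hl e (by simp [he])
  have h₁₂E : ∀ e ∈ l₁ ++ l₂, e ∈ E := fun e he =>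
    hl e (by simp only [List.mem_append] at he ⊢; tauto)
  have := List.length_pos_iff.2 hc
  have := List.length_pos_iff.2 hl₂
  have hc₀ := ih c.length (by simp [← hn]; omega) h₂ hcE rfl
  have h₁₂ := ih (l₁ ++ l₂).length (by simp [← hn]; omega) (isWalk_append.2 ⟨z, h₁, h₃⟩)
    h₁₂E rfl
  simp only [weight_append] at h₁₂ ⊢
  linarith

theorem exists_satB_of_forall_cycle_nonneg [Fintype V] {E : Finset (V × V × Bnd)}
    (hE : ∀ x l, IsWalk x x l → (∀ e ∈ l, e ∈ E) → 0 ≤ weight id l) :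
    ∃ p : V → ℝ, ∀ e ∈ E, satB (p e.1 - p e.2.1) e.2.2 := by
  set ε : ℝ := 1 / (Fintype.card V + 1)
  have hε : 0 < ε := by positivity
  have hεV : ε * Fintype.card V < 1 := by
    rw [div_mul_eq_mul_div, one_mul, div_lt_one (by positivity)]
    linarith
  obtain ⟨p, hp⟩ := exists_potential_of_forall_cycle_nonneg (w := Bnd.relax ε) fun x l h hl =>
    h.weight_relax_nonneg (E := E) hE hε.le hεV hl
  exact ⟨p, fun e he => Bnd.satB_of_le_relax hε (by linarith [hp e he])⟩

end Relaxation

lemma List.two_mul_countP_le_length {α : Type*} {p : α → Prop} [DecidablePred p] {l : List α}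
    (hl : l.IsChain fun a b => ¬ (p a ∧ p b)) (hhead : ∀ a ∈ l.head?, ¬ p a) :
    2 * l.countP (fun a => decide (p a)) ≤ l.length := by
  induction l using List.twoStepInduction with
  | nil => simp
  | singleton a => simp [hhead a rfl]
  | cons_cons a b t iht ihbt =>
    have ha : ¬ p a := hhead a rfl
    by_cases hb : p b
    · have := iht hl.tail.tail fun c hc hpc => hl.tail.rel_head? hc ⟨hb, hpc⟩
      simp only [List.countP_cons, ha, hb, decide_false, decide_true, List.length_cons,
        if_true, Bool.false_eq_true, if_false]
      omega
    · have := ihbt b hl.tail fun c hc => by simp_all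
      simp only [List.countP_cons, ha, decide_false, List.length_cons, Bool.false_eq_true,
        if_false] at this ⊢
      omega

section NegCycle

variable {V G : Type*} [AddCommMonoid G] [LinearOrder G]

structure IsMinNegCycle (E : Set (V × V × G)) (x : V) (l : List (V × V × G)) : Prop where
  isWalk : IsWalk x x l
  mem : ∀ e ∈ l, e ∈ E
  weight_neg : weight id l < 0
  length_le : ∀ y m, IsWalk y y m → (∀ e ∈ m, e ∈ E) → weight id m < 0 → l.length ≤ m.length

variable {E : Set (V × V × G)}

lemma exists_isMinNegCycle (h : ∃ x l, IsWalk x x l ∧ (∀ e ∈ l, e ∈ E) ∧ weight id l < 0) :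
    ∃ x l, IsMinNegCycle E x l := by
  obtain ⟨⟨x, l⟩, ⟨hw, hE, hneg⟩, hmin⟩ :=
    (measure fun p : V × List (V × V × G) => p.2.length).wf.has_min
      {p | IsWalk p.1 p.1 p.2 ∧ (∀ e ∈ p.2, e ∈ E) ∧ weight id p.2 < 0}
      (by obtain ⟨x, l, h⟩ := h; exact ⟨(x, l), h⟩)
  exact ⟨x, l, hw, hE, hneg, fun y m hm hmE hmneg => not_lt.1 (hmin (y, m) ⟨hm, hmE, hmneg⟩)⟩

lemma IsMinNegCycle.rotate {x : V} {l m : List (V × V × G)} (h : IsMinNegCycle E x (l ++ m)) :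
    ∃ y, IsMinNegCycle E y (m ++ l) := by
  obtain ⟨hw, hE, hneg, hmin⟩ := h
  obtain ⟨y, hy⟩ := hw.rotate
  refine ⟨y, hy, fun e he => hE e (by simp only [List.mem_append] at he ⊢; tauto),
    by simpa [add_comm] using hneg, fun z k hk hkE hkneg => ?_⟩
  simpa [add_comm] using hmin z k hk hkE hkneg

lemma IsMinNegCycle.nodup [IsOrderedAddMonoid G] {x : V} {l : List (V × V × G)}
    (h : IsMinNegCycle E x l) : (l.map Prod.fst).Nodup := by
  by_contra hnd
  obtain ⟨hw, hE, hneg, hmin⟩ := h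
  obtain ⟨z, l₁, c, l₂, rfl, hc, hl₂, h₁, h₂, h₃⟩ := hw.exists_cycle_of_not_nodup hnd
  have := List.length_pos_iff.2 hc
  have := List.length_pos_iff.2 hl₂
  rcases lt_or_ge (weight id c) 0 with hc₀ | hc₀
  · have := hmin z c h₂ (fun e he => hE e (by simp [he])) hc₀
    simp only [List.length_append] at this
    omega
  · have hneg' : weight id (l₁ ++ l₂) < 0 := by
      refine lt_of_not_ge fun h₁₂ => hneg.not_ge ?_
      simp only [weight_append] at h₁₂ ⊢
      rw [add_right_comm]
      exact add_nonneg h₁₂ hc₀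
    have := hmin x _ (isWalk_append.2 ⟨z, h₁, h₃⟩)
      (fun e he => hE e (by simp only [List.mem_append] at he ⊢; tauto)) hneg'
    simp only [List.length_append] at this
    omega

lemma IsMinNegCycle.isChain {P : Set (V × V × G)} (hPE : P ⊆ E)
    (hP : ∀ a b, a.2.1 = b.1 → a ∈ P → b ∈ P → (a.1, b.2.1, a.2.2 + b.2.2) ∈ P)
    {x : V} {l : List (V × V × G)} (h : IsMinNegCycle E x l) :
    l.IsChain fun a b => ¬ (a ∈ P ∧ b ∈ P) := by
  refine List.isChain_iff_forall_rel_of_append_cons_cons.2 fun a b l₁ l₂ hl ⟨haP, hbP⟩ => ?_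
  subst hl
  obtain ⟨hw, hE, hneg, hmin⟩ := h
  obtain ⟨hab, hw'⟩ := hw.merge
  have := hmin x _ hw' (fun e he => ?_) (by simpa [add_assoc] using hneg)
  · simp at this
  · simp only [List.mem_append, List.mem_cons] at he
    rcases he with he | rfl | he
    · exact hE e (by simp [he])
    · exact hPE (hP a b hab haP hbP)
    · exact hE e (by simp [he])

end NegCycle

theorem exists_neg_cycle_small_cover {V G : Type*} [Fintype V] [AddCommMonoid G]
    [LinearOrder G] [IsOrderedAddMonoid G] {P Q : Set (V × V × G)}
    (hP : ∀ a b, a.2.1 = b.1 → a ∈ P → b ∈ P → (a.1, b.2.1, a.2.2 + b.2.2) ∈ P)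
    (hPnonneg : ∀ x l, IsWalk x x l → (∀ e ∈ l, e ∈ P) → 0 ≤ weight id l)
    (h : ∃ x l, IsWalk x x l ∧ (∀ e ∈ l, e ∈ P ∪ Q) ∧ weight id l < 0) :
    ∃ x l, ∃ F : Finset (V × V × G), IsWalk x x l ∧ weight id l < 0 ∧
      2 * F.card ≤ Fintype.card V ∧ ↑F ⊆ P ∧ ∀ e ∈ l, e ∈ F ∨ e ∈ Q := by
  classical
  obtain ⟨x₀, l₀, hmin₀⟩ := exists_isMinNegCycle h
  obtain ⟨e, he, heP⟩ : ∃ e ∈ l₀, e ∉ P := by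
    by_contra! hall
    exact hmin₀.weight_neg.not_ge (hPnonneg x₀ l₀ hmin₀.isWalk hall)
  obtain ⟨l₁, l₂, rfl⟩ := List.append_of_mem he
  obtain ⟨x, hmin⟩ := hmin₀.rotate
  set l := e :: l₂ ++ l₁
  have hcount : 2 * l.countP (fun a => decide (a ∈ P)) ≤ l.length :=
    List.two_mul_countP_le_length (hmin.isChain Set.subset_union_left hP) (by simp [l, heP])
  have hlen : l.length ≤ Fintype.card V := by simpa using hmin.nodup.length_le_card
  refine ⟨x, l, (l.filter (· ∈ P)).toFinset, hmin.isWalk, hmin.weight_neg, ?_, ?_, fun f hf => ?_⟩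
  · calc 2 * (l.filter (· ∈ P)).toFinset.card
        ≤ 2 * l.countP (fun a => decide (a ∈ P)) := by
          rw [List.countP_eq_length_filter]
          exact Nat.mul_le_mul_left 2 (List.toFinset_card_le _)
      _ ≤ Fintype.card V := hcount.trans hlen
  · intro f hf
    simp only [Finset.mem_coe, List.mem_toFinset, List.mem_filter, decide_eq_true_eq] at hf
    exact hf.2
  · by_cases hfP : f ∈ P
    · exact Or.inl (by simp [hf, hfP])
    · exact Or.inr ((hmin.mem f hf).resolve_left hfP)

section Zone

variable {C : Type*}

def validOn (S : Set (C → ℝ)) : Set (Option C × Option C × Bnd) :=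
  {g | ∀ v ∈ S, satB (val0 v g.1 - val0 v g.2.1) g.2.2}

lemma validOn_trans (S : Set (C → ℝ)) :
    ∀ a b, a.2.1 = b.1 → a ∈ validOn S → b ∈ validOn S →
      (a.1, b.2.1, a.2.2 + b.2.2) ∈ validOn S :=
  fun _ _ hab ha hb v hv => satB_trans hab (ha v hv) (hb v hv)

lemma weight_nonneg_of_validOn {S : Set (C → ℝ)} (hS : S.Nonempty) :
    ∀ x l, IsWalk x x l → (∀ e ∈ l, e ∈ validOn S) → 0 ≤ weight id l := by
  obtain ⟨v, hv⟩ := hS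
  exact fun x l h hl => h.weight_nonneg_of_satB fun e he => hl e he v hv

theorem exists_neg_cycle_of_disjoint [Fintype C] {A B : Set (C → ℝ)} (hA : IsZone A)
    (hB : IsZone B) (hdisj : A ∩ B = ∅) :
    ∃ x l, IsWalk x x l ∧ (∀ e ∈ l, e ∈ validOn A ∪ validOn B) ∧ weight id l < 0 := by
  classical
  obtain ⟨GA, rfl⟩ := hA
  obtain ⟨GB, rfl⟩ := hB
  -- `N` holds the constraints `0 - c ≤ 0`, which turn a solution into a valuation.
  set N : Finset (Option C × Option C × Bnd) := Finset.univ.image fun c => (none, some c, 0)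
  have hE : ∀ e ∈ GA ∪ N ∪ GB, e ∈ validOn (zoneOf GA) ∪ validOn (zoneOf GB) := by
    intro e he
    simp only [Finset.mem_union, Finset.mem_image, Finset.mem_univ, true_and, N] at he
    rcases he with (he | ⟨c, rfl⟩) | he
    · exact Or.inl fun v hv => hv.2 e he
    · exact Or.inl fun v hv => by simpa [satB, val0, Bnd.ofLex_zero] using hv.1 c
    · exact Or.inr fun v hv => hv.2 e he
  by_contra! hno
  obtain ⟨p, hp⟩ := exists_satB_of_forall_cycle_nonneg (E := GA ∪ N ∪ GB)
    fun x l h hl => hno x l h fun e he => hE e (hl e he)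
  set v : C → ℝ := fun c => p (some c) - p none
  have hv : ∀ g ∈ GA ∪ N ∪ GB, satB (val0 v g.1 - val0 v g.2.1) g.2.2 := by
    intro g hg
    convert hp g hg using 1
    rcases g with ⟨_ | x, _ | y, b⟩ <;> simp [val0, v]
  have hnonneg : ∀ c, 0 ≤ v c := fun c => by
    simpa [satB, val0, Bnd.ofLex_zero] using hv (none, some c, 0) (by simp [N])
  have : v ∈ zoneOf GA ∩ zoneOf GB :=
    ⟨⟨hnonneg, fun g hg => hv g (by simp [hg])⟩, ⟨hnonneg, fun g hg => hv g (by simp [hg])⟩⟩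
  simp [hdisj] at this

end Zone

theorem small_interpolant_general {C : Type*} [Fintype C] (A B : Set (C → ℝ))
    (hA : IsZone A) (hB : IsZone B) (hAne : A.Nonempty)
    (hdisj : A ∩ B = ∅) :
    ∃ G : Finset (Option C × Option C × Bnd),
      G.card ≤ (Fintype.card C + 1) / 2 ∧ A ⊆ zoneOf G ∧ zoneOf G ∩ B = ∅ := by
  obtain ⟨x, l, G, hl, hneg, hcard, hGA, hcover⟩ :=
    exists_neg_cycle_small_cover (validOn_trans A) (weight_nonneg_of_validOn hAne)
      (exists_neg_cycle_of_disjoint hA hB hdisj)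
  rw [Fintype.card_option] at hcard
  refine ⟨G, by omega, ?_, ?_⟩
  · obtain ⟨GA, rfl⟩ := hA
    exact fun v hv => ⟨hv.1, fun g hg => hGA hg v hv⟩
  · refine Set.eq_empty_of_forall_notMem fun v ⟨hvG, hvB⟩ =>
      hneg.not_ge (hl.weight_nonneg_of_satB (p := val0 v) fun e he => ?_)
    rcases hcover e he with heG | heB
    exacts [hvG.2 e heG, heB v hvB]

/-- For every pair `(A, B)` of disjoint nonempty zones over the finite clock set
`C`, there is an interpolant for `(A, B)` defined by a finite set of at most
`⌊(|C| + 1) / 2⌋` atomic constraints. -/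
theorem small_interpolant {C : Type*} [Fintype C] (A B : Set (C → ℝ))
    (hA : IsZone A) (hB : IsZone B) (hAne : A.Nonempty) (hBne : B.Nonempty)
    (hdisj : A ∩ B = ∅) :
    ∃ G : Finset (Option C × Option C × Bnd),
      G.card ≤ (Fintype.card C + 1) / 2 ∧ A ⊆ zoneOf G ∧ zoneOf G ∩ B = ∅ :=
  small_interpolant_general A B hA hB hAne hdisj
end

section
/- Let A and B be canonical DBMs over C0 with ⟦B⟧ ≠ ∅. Suppose n ≥ 1 and x₀, …, x_{2n−1} ∈ C0 are pairwise distinct and satisfy, writing x_{2n} = x₀, Σ_{i=0}^{n−1} ( A(x_{2i},x_{2i+1}) + B(x_{2i+1},x_{2i+2}) ) < (0,≤) (in particular all these matrix entries are finite bounds). Then the zone I = {v ∈ ℝ≥0^C : for every 0 ≤ i < n, if B(x_{2i+1},x_{2i+2}) = (k,≺) then v(x_{2i+1}) − v(x_{2i+2}) ≺ k} satisfies ⟦B⟧ ⊆ I and I ∩ ⟦A⟧ = ∅; that is, I is an interpolant for (⟦B⟧,⟦A⟧) defined by at most n atomic constraints. -/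
variable {C : Type*}

/-- A DBM over `C0 = C ∪ {0}`: entries are bounds or `∞` (`⊤`). -/
abbrev DBM (C : Type*) := Option C → Option C → WithTop Bnd

/-- The zone defined by a DBM. -/
def dbmZone (M : DBM C) : Set (C → ℝ) :=
  {v | (∀ c, 0 ≤ v c) ∧
    ∀ (x y : Option C) (b : Bnd), M x y = (b : WithTop Bnd) →
      satB (val0 v x - val0 v y) b}

/-- A canonical DBM. -/
def Canonical (M : DBM C) : Prop :=
  (∀ x, M x x = ((0 : Bnd) : WithTop Bnd)) ∧
  ∀ x y z, M x z ≤ M x y + M y z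

/-! A valuation in `I ∩ ⟦A⟧` satisfies every edge constraint along the alternating cycle: the
`A`-edges because it lies in `⟦A⟧`, the `B`-edges because it lies in `I`. Adding these
constraints, the clock differences telescope around the cycle to `0`, so `0` would satisfy the
sum of the bounds, which is negative. The inclusion `⟦B⟧ ⊆ I` holds because `I` only keeps some
of the constraints of `B`. -/

def satEntry (d : ℝ) (w : WithTop Bnd) : Prop :=
  ∀ b : Bnd, w = b → satB d b

lemma satB_zero : satB 0 0 := by
  simp [satB, show ofLex (0 : Bnd) = (0, true) from rfl]

lemma satB_add {d d' : ℝ} {b b' : Bnd} (h : satB d b) (h' : satB d' b') :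
    satB (d + d') (b + b') := by
  have hfst : (ofLex (b + b')).1 = (ofLex b).1 + (ofLex b').1 := rfl
  have hsnd : (ofLex (b + b')).2 = ((ofLex b).2 && (ofLex b').2) := rfl
  unfold satB at *
  rw [hfst, hsnd]
  cases hs : (ofLex b).2 <;> cases hs' : (ofLex b').2 <;>
    simp only [hs, hs', if_true, if_false, Bool.and_self, Bool.and_false, Bool.and_true,
      Bool.false_eq_true] at h h' ⊢ <;>
    push_cast <;> linarith

lemma not_satB_zero_of_neg {b : Bnd} (hb : b < 0) : ¬ satB 0 b := by
  have hb' : (ofLex b).1 < 0 ∨ (ofLex b).1 = 0 ∧ (ofLex b).2 < true :=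
    Prod.Lex.lt_iff.1 (show toLex (ofLex b) < toLex ((0 : ℤ), true) from hb)
  unfold satB
  rcases hb' with hneg | ⟨hzero, hstrict⟩
  · have : ((ofLex b).1 : ℝ) < 0 := by exact_mod_cast hneg
    split_ifs <;> linarith
  · simp [hzero, Bool.eq_false_iff.2 hstrict.ne]

lemma satEntry_zero : satEntry 0 ((0 : Bnd) : WithTop Bnd) := by
  rintro b hb
  rw [← WithTop.coe_eq_coe.1 hb]
  exact satB_zero

lemma satEntry_add {d d' : ℝ} {w w' : WithTop Bnd} (h : satEntry d w) (h' : satEntry d' w') :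
    satEntry (d + d') (w + w') := by
  intro c hc
  obtain ⟨b, b', rfl, rfl, rfl⟩ := WithTop.add_eq_coe.1 hc
  exact satB_add (h b rfl) (h' b' rfl)

lemma satEntry_sum {ι : Type*} (s : Finset ι) (d : ι → ℝ) (w : ι → WithTop Bnd)
    (h : ∀ i ∈ s, satEntry (d i) (w i)) :
    satEntry (∑ i ∈ s, d i) (∑ i ∈ s, w i) := by
  induction s using Finset.cons_induction with
  | empty => simpa using satEntry_zero
  | cons a s ha ih =>
    rw [Finset.sum_cons, Finset.sum_cons]
    exact satEntry_add (h a (by simp)) (ih fun i hi => h i (by simp [hi]))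

lemma not_satEntry_zero_of_neg {w : WithTop Bnd} (hw : w < ((0 : Bnd) : WithTop Bnd)) :
    ¬ satEntry 0 w := by
  obtain ⟨b, rfl⟩ := WithTop.ne_top_iff_exists.1 hw.ne_top
  exact fun h => not_satB_zero_of_neg (WithTop.coe_lt_coe.1 hw) (h b rfl)

lemma satEntry_of_mem_dbmZone {M : DBM C} {v : C → ℝ} (hv : v ∈ dbmZone M) (y z : Option C) :
    satEntry (val0 v y - val0 v z) (M y z) :=
  fun b hb => hv.2 y z b hb

lemma sum_cycle_sub_eq_zero {G : Type*} [AddCommGroup G] (f : ℕ → G) (n : ℕ) :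
    ∑ i ∈ Finset.range n,
      ((f (2 * i) - f (2 * i + 1)) + (f (2 * i + 1) - f ((2 * i + 2) % (2 * n)))) = 0 := by
  set g : ℕ → G := fun j => f (2 * j % (2 * n))
  have hterm : ∀ i ∈ Finset.range n,
      (f (2 * i) - f (2 * i + 1)) + (f (2 * i + 1) - f ((2 * i + 2) % (2 * n))) =
        g i - g (i + 1) := by
    intro i hi
    have hlt : 2 * i < 2 * n := by have := Finset.mem_range.1 hi; omega
    simp only [g, Nat.mod_eq_of_lt hlt, mul_add, mul_one]
    abel
  rw [Finset.sum_congr rfl hterm, Finset.sum_range_sub']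
  simp [g]

theorem interpolant_from_alternating_cycle_general {C : Type*}
    (A B : DBM C)
    (n : ℕ) (x : ℕ → Option C)
    (hcyc : (∑ i ∈ Finset.range n,
        (A (x (2 * i)) (x (2 * i + 1)) +
         B (x (2 * i + 1)) (x ((2 * i + 2) % (2 * n))))) <
      ((0 : Bnd) : WithTop Bnd)) :
    let I : Set (C → ℝ) :=
      {v | (∀ c, 0 ≤ v c) ∧
        ∀ i < n, ∀ b : Bnd,
          B (x (2 * i + 1)) (x ((2 * i + 2) % (2 * n))) = (b : WithTop Bnd) →
          satB (val0 v (x (2 * i + 1)) - val0 v (x ((2 * i + 2) % (2 * n)))) b}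
    dbmZone B ⊆ I ∧ I ∩ dbmZone A = ∅ := by
  intro I
  refine ⟨fun v hv => ⟨hv.1, fun i _ => satEntry_of_mem_dbmZone hv _ _⟩, ?_⟩
  refine Set.eq_empty_iff_forall_notMem.2 fun v ⟨⟨_, hvI⟩, hvA⟩ => ?_
  have hedges := satEntry_sum (Finset.range n)
    (fun i => (val0 v (x (2 * i)) - val0 v (x (2 * i + 1))) +
      (val0 v (x (2 * i + 1)) - val0 v (x ((2 * i + 2) % (2 * n)))))
    (fun i => A (x (2 * i)) (x (2 * i + 1)) + B (x (2 * i + 1)) (x ((2 * i + 2) % (2 * n))))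
    fun i hi => satEntry_add (satEntry_of_mem_dbmZone hvA _ _) (hvI i (Finset.mem_range.1 hi))
  rw [sum_cycle_sub_eq_zero (fun j => val0 v (x j)) n] at hedges
  exact not_satEntry_zero_of_neg hcyc hedges

/-- Given canonical DBMs `A`, `B` with `⟦B⟧ ≠ ∅`, and a negative-weight cycle
`x₀, …, x_{2n−1}` (pairwise distinct, `x_{2n} = x₀`) alternating between `A`-
and `B`-edges, the zone `I` defined by the atomic constraints corresponding to
the `n` entries `B(x_{2i+1}, x_{2i+2})` is an interpolant for `(⟦B⟧, ⟦A⟧)`: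
`⟦B⟧ ⊆ I` and `I ∩ ⟦A⟧ = ∅`. -/
theorem interpolant_from_alternating_cycle {C : Type*}
    (A B : DBM C) (hA : Canonical A) (hB : Canonical B)
    (hBne : (dbmZone B).Nonempty)
    (n : ℕ) (hn : 1 ≤ n) (x : ℕ → Option C)
    (hinj : Set.InjOn x (Set.Iio (2 * n)))
    (hcyc : (∑ i ∈ Finset.range n,
        (A (x (2 * i)) (x (2 * i + 1)) +
         B (x (2 * i + 1)) (x ((2 * i + 2) % (2 * n))))) <
      ((0 : Bnd) : WithTop Bnd)) :
    let I : Set (C → ℝ) :=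
      {v | (∀ c, 0 ≤ v c) ∧
        ∀ i < n, ∀ b : Bnd,
          B (x (2 * i + 1)) (x ((2 * i + 2) % (2 * n))) = (b : WithTop Bnd) →
          satB (val0 v (x (2 * i + 1)) - val0 v (x ((2 * i + 2) % (2 * n)))) b}
    dbmZone B ⊆ I ∧ I ∩ dbmZone A = ∅ :=
  interpolant_from_alternating_cycle_general A B n x hcyc
end

section
/- Let A and B be canonical DBMs over C0. Suppose there exist m ≥ 1 and x₀, …, x_{m−1} ∈ C0 (with x_m = x₀) such that Σ_{i=0}^{m−1} min( A(x_i,x_{i+1}), B(x_i,x_{i+1}) ) < (0,≤), i.e., the entrywise minimum of A and B has a cycle of negative weight. Then there exist n with 1 ≤ n ≤ (|C|+1)/2 and pairwise distinct y₀, …, y_{2n−1} ∈ C0 such that, writing y_{2n} = y₀, Σ_{i=0}^{n−1} ( A(y_{2i},y_{2i+1}) + B(y_{2i+1},y_{2i+2}) ) < (0,≤); that is, there is a negative cycle with pairwise distinct vertices that strictly alternates between edges weighted by A and edges weighted by B. -/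
variable {C : Type*}

/-! Label each edge of the given negative cycle by the matrix attaining the minimum, and take a
shortest negative labelled cycle. Two consecutive edges with the same label merge into one by the
triangle inequality of that matrix, and a repeated vertex splits the cycle into two shorter cycles,
one of which is negative; so a shortest negative cycle has distinct vertices and alternating labels.
Loops weigh `(0, ≤)`, hence it has at least two edges, and it alternates all the way round, hence
its length is even. -/

instance : IsOrderedAddMonoid Bnd where
  add_le_add_left a b hab c := by
    change toLex ((ofLex a).1 + (ofLex c).1, (ofLex a).2 && (ofLex c).2) ≤
      toLex ((ofLex b).1 + (ofLex c).1, (ofLex b).2 && (ofLex c).2)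
    rcases Prod.Lex.le_iff.mp hab with h | ⟨h1, h2⟩
    · exact Prod.Lex.le_iff.mpr (Or.inl (by simpa using h))
    · refine Prod.Lex.le_iff.mpr (Or.inr ⟨by simp [h1], ?_⟩)
      revert h2
      cases (ofLex a).2 <;> cases (ofLex b).2 <;> cases (ofLex c).2 <;> simp

theorem List.exists_eq_append_cons_append_cons_of_not_pairwise {α : Type*} {R : α → α → Prop}
    {l : List α} (h : ¬l.Pairwise R) :
    ∃ l₀ a l₁ b l₂, l = l₀ ++ a :: (l₁ ++ b :: l₂) ∧ ¬R a b := by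
  induction l with
  | nil => exact absurd Pairwise.nil h
  | cons x l ih =>
    rw [pairwise_cons, not_and_or] at h
    rcases h with h | h
    · push Not at h
      obtain ⟨b, hb, hxb⟩ := h
      obtain ⟨l₁, l₂, rfl⟩ := append_of_mem hb
      exact ⟨[], x, l₁, b, l₂, rfl, hxb⟩
    · obtain ⟨l₀, a, l₁, b, l₂, rfl, hab⟩ := ih h
      exact ⟨x :: l₀, a, l₁, b, l₂, rfl, hab⟩

theorem List.getElem_eq_decide_even_of_isChain_ne {l : List Bool} (hl : l.IsChain (· ≠ ·))
    (h₀ : l.head? = some true) : ∀ k (hk : k < l.length), l[k] = decide (Even k)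
  | 0, hk => by cases l <;> simp_all
  | k + 1, hk => by
    have hne := hl.getElem k hk
    rw [l.getElem_eq_decide_even_of_isChain_ne hl h₀ k (by omega)] at hne
    revert hne
    cases l[k + 1] <;> by_cases he : Even k <;> simp [he, Nat.even_add_one]

theorem Finset.sum_range_two_mul {M : Type*} [AddCommMonoid M] (f : ℕ → M) (n : ℕ) :
    ∑ i ∈ range (2 * n), f i = ∑ i ∈ range n, (f (2 * i) + f (2 * i + 1)) := by
  induction n with
  | zero => simp
  | succ n ih => rw [Nat.mul_succ, sum_range_succ, sum_range_succ, sum_range_succ, ih, add_assoc]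

section LabelledCycle

variable {V ι M : Type*} [AddCommMonoid M] (w : ι → V → V → M)

/-- `pathWeight w (v₀, i₀) [(v₁, i₁), …, (vₖ, iₖ)] t` is the weight of the path
`v₀ → v₁ → ⋯ → vₖ → t` whose edge leaving `vⱼ` is weighted by `w iⱼ`; a list `c` of labelled
vertices is read as the closed path through them, of weight `cycleWeight w c`. -/
def pathWeight : V × ι → List (V × ι) → V → M
  | p, [], t => w p.2 p.1 t
  | p, q :: l, t => w p.2 p.1 q.1 + pathWeight q l t

def cycleWeight : List (V × ι) → M
  | [] => 0
  | p :: l => pathWeight w p l p.1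

variable {w}

theorem pathWeight_append (p q : V × ι) (l₁ l₂ : List (V × ι)) (t : V) :
    pathWeight w p (l₁ ++ q :: l₂) t = pathWeight w p l₁ q.1 + pathWeight w q l₂ t := by
  induction l₁ generalizing p with
  | nil => rfl
  | cons r l₁ ih => simp only [List.cons_append, pathWeight, ih, add_assoc]

theorem cycleWeight_cons_append_cons (p q : V × ι) (l₁ l₂ : List (V × ι)) :
    cycleWeight w (p :: (l₁ ++ q :: l₂)) = pathWeight w p l₁ q.1 + pathWeight w q l₂ p.1 :=
  pathWeight_append p q l₁ l₂ p.1

theorem cycleWeight_append_comm (l₁ l₂ : List (V × ι)) :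
    cycleWeight w (l₁ ++ l₂) = cycleWeight w (l₂ ++ l₁) := by
  match l₁, l₂ with
  | [], _ => simp
  | _, [] => simp
  | p :: l₁, q :: l₂ =>
    rw [List.cons_append, List.cons_append, cycleWeight_cons_append_cons,
      cycleWeight_cons_append_cons, add_comm]

theorem cycleWeight_cons_append_cons_of_fst_eq {p q : V × ι} (h : p.1 = q.1)
    (l₁ l₂ : List (V × ι)) :
    cycleWeight w (p :: (l₁ ++ q :: l₂)) = cycleWeight w (p :: l₁) + cycleWeight w (q :: l₂) := by
  rw [cycleWeight_cons_append_cons]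
  show _ = pathWeight w p l₁ p.1 + pathWeight w q l₂ q.1
  rw [h]

theorem pathWeight_eq_sum_getD (d : V × ι) (p : V × ι) (l : List (V × ι)) (t : V) :
    pathWeight w p l t = ∑ j ∈ Finset.range l.length,
        w ((p :: l).getD j d).2 ((p :: l).getD j d).1 ((p :: l).getD (j + 1) d).1 +
      w ((p :: l).getD l.length d).2 ((p :: l).getD l.length d).1 t := by
  induction l generalizing p with
  | nil => simp [pathWeight]
  | cons q l ih =>
    rw [pathWeight, ih, List.length_cons, Finset.sum_range_succ', ← add_assoc, add_comm (w _ _ _)]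
    simp

theorem cycleWeight_eq_sum_getD (d : V × ι) (c : List (V × ι)) :
    cycleWeight w c = ∑ j ∈ Finset.range c.length,
      w (c.getD j d).2 (c.getD j d).1 (c.getD ((j + 1) % c.length) d).1 := by
  match c with
  | [] => rfl
  | p :: l =>
    rw [cycleWeight, pathWeight_eq_sum_getD d, List.length_cons, Finset.sum_range_succ,
      Nat.mod_self]
    congr 1
    refine Finset.sum_congr rfl fun j hj => ?_
    rw [Nat.mod_eq_of_lt (by simpa using hj)]

theorem cycleWeight_eq_sum_of_alternating {w : Bool → V → V → M} (d : V × Bool)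
    {c : List (V × Bool)} {n : ℕ} (hlen : c.length = 2 * n)
    (hlab : ∀ k < c.length, (c.getD k d).2 = decide (Even k)) :
    cycleWeight w c = ∑ i ∈ Finset.range n,
      (w true (c.getD (2 * i) d).1 (c.getD (2 * i + 1) d).1 +
        w false (c.getD (2 * i + 1) d).1 (c.getD ((2 * i + 2) % (2 * n)) d).1) := by
  rw [cycleWeight_eq_sum_getD d, hlen, Finset.sum_range_two_mul]
  refine Finset.sum_congr rfl fun i hi => ?_
  have hi : i < n := Finset.mem_range.mp hi
  rw [hlab (2 * i) (by omega), hlab (2 * i + 1) (by omega),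
    Nat.mod_eq_of_lt (by omega : 2 * i + 1 < 2 * n)]
  simp

theorem pathWeight_le_add [Preorder M] [IsOrderedAddMonoid M]
    (htri : ∀ i x y z, w i x z ≤ w i x y + w i y z) (i : ι) (u v : V)
    (l : List (V × ι)) (t : V) :
    pathWeight w (u, i) l t ≤ w i u v + pathWeight w (v, i) l t := by
  cases l with
  | nil => exact htri i u v t
  | cons q l =>
    calc w i u q.1 + pathWeight w q l t
        ≤ w i u v + w i v q.1 + pathWeight w q l t := add_le_add (htri i u v q.1) le_rfl
      _ = w i u v + (w i v q.1 + pathWeight w q l t) := add_assoc _ _ _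

theorem cycleWeight_cons_le_cons_cons [Preorder M] [IsOrderedAddMonoid M]
    (htri : ∀ i x y z, w i x z ≤ w i x y + w i y z)
    {p q : V × ι} (h : p.2 = q.2) (l : List (V × ι)) :
    cycleWeight w (p :: l) ≤ cycleWeight w (p :: q :: l) := by
  obtain ⟨u, i⟩ := p
  obtain ⟨v, j⟩ := q
  obtain rfl : i = j := h
  exact pathWeight_le_add htri i u v l u

variable [LinearOrder M]

variable (w) in
def IsShortestNegCycle (c : List (V × ι)) : Prop :=
  cycleWeight w c < 0 ∧ ∀ c', cycleWeight w c' < 0 → c.length ≤ c'.length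

theorem exists_isShortestNegCycle {c : List (V × ι)} (h : cycleWeight w c < 0) :
    ∃ c, IsShortestNegCycle w c := by
  obtain ⟨c₀, hc₀, hmin⟩ :=
    (measure List.length).wf.has_min {c | cycleWeight w c < 0} ⟨c, h⟩
  exact ⟨c₀, hc₀, fun c' hc' => not_lt.mp (hmin c' hc')⟩

namespace IsShortestNegCycle

variable {c : List (V × ι)}

theorem append_comm {l₁ l₂ : List (V × ι)} (h : IsShortestNegCycle w (l₁ ++ l₂)) :
    IsShortestNegCycle w (l₂ ++ l₁) :=
  ⟨by rw [cycleWeight_append_comm]; exact h.1, fun c' hc' => by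
    have := h.2 c' hc'
    rw [List.length_append] at this ⊢
    omega⟩

theorem two_le_length (hrefl : ∀ i v, 0 ≤ w i v v) (h : IsShortestNegCycle w c) :
    2 ≤ c.length :=
  match c, h with
  | [], h => absurd h.1 (lt_irrefl 0)
  | [p], h => absurd h.1 (not_lt.mpr (hrefl p.2 p.1))
  | _ :: _ :: _, _ => by simp

variable [IsOrderedAddMonoid M]

theorem isChain (htri : ∀ i x y z, w i x z ≤ w i x y + w i y z)
    (h : IsShortestNegCycle w c) : c.IsChain (fun p q => p.2 ≠ q.2) := by
  refine List.isChain_iff_forall_rel_of_append_cons_cons.mpr fun p q l₁ l₂ hc hpq => ?_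
  subst hc
  have hrot : IsShortestNegCycle w (p :: q :: (l₂ ++ l₁)) := by simpa using h.append_comm
  have := hrot.2 _ ((cycleWeight_cons_le_cons_cons htri hpq _).trans_lt hrot.1)
  simp at this

theorem isChain_append_singleton (htri : ∀ i x y z, w i x z ≤ w i x y + w i y z)
    (hrefl : ∀ i v, 0 ≤ w i v v) {p : V × ι} {l : List (V × ι)}
    (h : IsShortestNegCycle w (p :: l)) : (p :: l ++ [p]).IsChain (fun p q => p.2 ≠ q.2) := by
  obtain ⟨q, l, rfl⟩ := List.exists_cons_of_length_pos (l := l) (by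
    have := h.two_le_length hrefl
    simp only [List.length_cons] at this
    omega)
  have hrot : IsShortestNegCycle w (q :: l ++ [p]) := h.append_comm (l₁ := [p])
  simp only [List.cons_append, List.isChain_cons_cons]
  exact ⟨(List.isChain_cons_cons.mp (h.isChain htri)).1, hrot.isChain htri⟩

theorem nodup (h : IsShortestNegCycle w c) : (c.map Prod.fst).Nodup := by
  rw [List.Nodup, List.pairwise_map]
  by_contra hnd
  obtain ⟨l₀, p, l₁, q, l₂, rfl, hpq⟩ := List.exists_eq_append_cons_append_cons_of_not_pairwise hnd
  have hrot : IsShortestNegCycle w (p :: (l₁ ++ q :: (l₂ ++ l₀))) := by simpa using h.append_comm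
  have hsplit := hrot.1
  rw [cycleWeight_cons_append_cons_of_fst_eq (not_not.mp hpq)] at hsplit
  obtain hneg | hneg := lt_or_lt_of_add_lt_add (hsplit.trans_eq (add_zero 0).symm)
  all_goals
    have := hrot.2 _ hneg
    simp only [List.length_cons, List.length_append] at this
    omega

end IsShortestNegCycle

end LabelledCycle

section BoolLabels

variable {V M : Type*} [AddCommMonoid M] [LinearOrder M] {w : Bool → V → V → M}

theorem cycleWeight_range_map_decide_le (x : ℕ → V) (m : ℕ) :
    cycleWeight w ((List.range m).map fun i =>
        (x i, decide (w true (x i) (x ((i + 1) % m)) ≤ w false (x i) (x ((i + 1) % m))))) =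
      ∑ i ∈ Finset.range m,
        min (w true (x i) (x ((i + 1) % m))) (w false (x i) (x ((i + 1) % m))) := by
  rw [cycleWeight_eq_sum_getD (x 0, true)]
  refine Finset.sum_congr (by simp) fun i hi => ?_
  have hi : i < m := Finset.mem_range.mp hi
  simp only [List.getD_eq_getElem?_getD, List.length_map, List.length_range, List.getElem?_map,
    List.getElem?_range, hi, Nat.mod_lt _ (Nat.zero_lt_of_lt hi), Option.map_some,
    Option.getD_some, min_def]
  split_ifs with h <;> simp [h]

variable [IsOrderedAddMonoid M]

theorem exists_isShortestNegCycle_cons_true (htri : ∀ i x y z, w i x z ≤ w i x y + w i y z)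
    (hrefl : ∀ i v, 0 ≤ w i v v) {c : List (V × Bool)} (h : cycleWeight w c < 0) :
    ∃ v l, IsShortestNegCycle w ((v, true) :: l) := by
  obtain ⟨c, hc⟩ := exists_isShortestNegCycle h
  obtain ⟨⟨u, i⟩, ⟨v, j⟩, l, rfl⟩ : ∃ p q l, c = p :: q :: l :=
    match c, hc.two_le_length hrefl with
    | p :: q :: l, _ => ⟨p, q, l, rfl⟩
  have hij : i ≠ j := (List.isChain_cons_cons.mp (hc.isChain htri)).1
  cases i
  · obtain rfl : j = true := by simpa using hij.symm
    exact ⟨v, l ++ [(u, false)], hc.append_comm (l₁ := [(u, false)])⟩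
  · exact ⟨u, (v, j) :: l, hc⟩

theorem IsShortestNegCycle.even_length_and_getD_snd
    (htri : ∀ i x y z, w i x z ≤ w i x y + w i y z) (hrefl : ∀ i v, 0 ≤ w i v v)
    {v : V} {l : List (V × Bool)} (h : IsShortestNegCycle w ((v, true) :: l)) (d : V × Bool) :
    Even ((v, true) :: l).length ∧
      ∀ k < ((v, true) :: l).length, (((v, true) :: l).getD k d).2 = decide (Even k) := by
  -- the labels alternate around the closed cycle, so index `length` carries the head label again
  set L := (((v, true) :: l) ++ [(v, true)]).map Prod.snd
  have hL : ∀ k (hk : k < L.length), L[k] = decide (Even k) :=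
    List.getElem_eq_decide_even_of_isChain_ne
      ((List.isChain_map _).mpr (h.isChain_append_singleton htri hrefl)) rfl
  refine ⟨?_, fun k hk => ?_⟩
  · simpa [L] using hL (l.length + 1) (by simp [L])
  · have := hL k (by simp [L] at hk ⊢; omega)
    simp only [L, List.getElem_map] at this
    rwa [List.getD_eq_getElem _ _ hk, ← List.getElem_append_left (bs := [(v, true)])]

theorem exists_injOn_sum_alternating_neg [Fintype V]
    (htri : ∀ i x y z, w i x z ≤ w i x y + w i y z) (hrefl : ∀ i v, 0 ≤ w i v v)
    (x : ℕ → V) (m : ℕ)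
    (hcyc : ∑ i ∈ Finset.range m,
      min (w true (x i) (x ((i + 1) % m))) (w false (x i) (x ((i + 1) % m))) < 0) :
    ∃ n, 1 ≤ n ∧ 2 * n ≤ Fintype.card V ∧ ∃ y : ℕ → V, Set.InjOn y (Set.Iio (2 * n)) ∧
      ∑ i ∈ Finset.range n,
        (w true (y (2 * i)) (y (2 * i + 1)) + w false (y (2 * i + 1)) (y ((2 * i + 2) % (2 * n))))
        < 0 := by
  obtain ⟨v, l, hc⟩ := exists_isShortestNegCycle_cons_true htri hrefl
    ((cycleWeight_range_map_decide_le x m).trans_lt hcyc)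
  obtain ⟨⟨n, hn⟩, hlab⟩ := hc.even_length_and_getD_snd htri hrefl (v, true)
  set c := (v, true) :: l
  have hnd := hc.nodup
  refine ⟨n, ?_, ?_, fun j => (c.getD j (v, true)).1, ?_, ?_⟩
  · have := hc.two_le_length hrefl
    omega
  · have := hnd.length_le_card
    rw [List.length_map] at this
    omega
  · intro a ha b hb hab
    dsimp only at hab
    rw [← List.getD_map (f := Prod.fst), ← List.getD_map (f := Prod.fst)] at hab
    rw [Set.mem_Iio] at ha hb
    exact (List.getD_inj (by simp; omega) (by simp; omega) hnd).mp hab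
  · rw [← cycleWeight_eq_sum_of_alternating (v, true) (by omega) hlab]
    exact hc.1

end BoolLabels

theorem alternating_negative_cycle_of_negative_cycle_general {C : Type*} [Fintype C]
    (A B : DBM C) (hA : Canonical A) (hB : Canonical B)
    (m : ℕ) (x : ℕ → Option C)
    (hcyc : (∑ i ∈ Finset.range m,
        min (A (x i) (x ((i + 1) % m))) (B (x i) (x ((i + 1) % m)))) <
      ((0 : Bnd) : WithTop Bnd)) :
    ∃ n : ℕ, 1 ≤ n ∧ 2 * n ≤ Fintype.card C + 1 ∧
      ∃ y : ℕ → Option C, Set.InjOn y (Set.Iio (2 * n)) ∧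
        (∑ i ∈ Finset.range n,
            (A (y (2 * i)) (y (2 * i + 1)) +
             B (y (2 * i + 1)) (y ((2 * i + 2) % (2 * n))))) <
          ((0 : Bnd) : WithTop Bnd) := by
  have htri : ∀ b u v t, (bif b then A else B) u t ≤
      (bif b then A else B) u v + (bif b then A else B) v t := by
    rintro (_ | _) u v t
    exacts [hB.2 u v t, hA.2 u v t]
  have hrefl : ∀ b u, 0 ≤ (bif b then A else B) u u := by
    rintro (_ | _) u
    exacts [(hB.1 u).ge, (hA.1 u).ge]
  rw [← Fintype.card_option]
  exact exists_injOn_sum_alternating_neg htri hrefl x m hcyc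

/-- If the entrywise minimum of two canonical DBMs `A`, `B` has a cycle
`x₀, …, x_{m−1}` (with `x_m = x₀`) of negative weight, then there is a
negative-weight cycle `y₀, …, y_{2n−1}` (pairwise distinct, `y_{2n} = y₀`,
`1 ≤ n` and `2n ≤ |C| + 1`) that strictly alternates between `A`-edges and
`B`-edges. -/
theorem alternating_negative_cycle_of_negative_cycle {C : Type*} [Fintype C]
    (A B : DBM C) (hA : Canonical A) (hB : Canonical B)
    (m : ℕ) (hm : 1 ≤ m) (x : ℕ → Option C)
    (hcyc : (∑ i ∈ Finset.range m,
        min (A (x i) (x ((i + 1) % m))) (B (x i) (x ((i + 1) % m)))) <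
      ((0 : Bnd) : WithTop Bnd)) :
    ∃ n : ℕ, 1 ≤ n ∧ 2 * n ≤ Fintype.card C + 1 ∧
      ∃ y : ℕ → Option C, Set.InjOn y (Set.Iio (2 * n)) ∧
        (∑ i ∈ Finset.range n,
            (A (y (2 * i)) (y (2 * i + 1)) +
             B (y (2 * i + 1)) (y ((2 * i + 2) % (2 * n))))) <
          ((0 : Bnd) : WithTop Bnd) :=
  alternating_negative_cycle_of_negative_cycle_general A B hA hB m x hcyc
end

section
/- Let 𝒟 be an abstract domain and z ∈ C. Define the relation S_Reset_z on minterms by: (u,w) ∈ S_Reset_z iff (1) for every (k,≺) ∈ 𝒟_{z,0} with (k,≺) ≥ (0,≤), w⟦z−0≺k⟧ = true; (2) for every x ∈ C0 with x ≠ z and every (k,≺) ∈ 𝒟_{x,z}, if u⟦x−0≺'l⟧ = true for some (l,≺') ∈ 𝒟_{x,0} with (l,≺') ≤ (k,≺), then w⟦x−z≺k⟧ = true; (3) for every y ∈ C0 with y ≠ z and every (k,≺) ∈ 𝒟_{z,y}, if u⟦0−y≺'l⟧ = true for some (l,≺') ∈ 𝒟_{0,y} with (l,≺') ≤ (k,≺),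 then w⟦z−y≺k⟧ = true; (4) for every y ∈ C0 with y ≠ z and every (k,≺) ∈ 𝒟_{z,y} with (k,≺) ≥ (0,≤), w⟦z−y≺k⟧ = true; and (5) for all x,y ∈ C0 with x ≠ z and y ≠ z and all (k,≺) ∈ 𝒟_{x,y}, w⟦x−y≺k⟧ = u⟦x−y≺k⟧. Then for every set A of minterms, α_𝒟(⟦A⟧[z←0]) ⊆ {w : there exists u ∈ A with (u,w) ∈ S_Reset_z}. -/
/-- The inverse of a bound: the inverse of `(k, ≺)` is `(−k, ≺⁻¹)`, where
`≤⁻¹ = <` and `<⁻¹ = ≤`. -/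
def bndInv (b : Bnd) : Bnd := toLex (-(ofLex b).1, !(ofLex b).2)

variable {C : Type*}

/-- An abstract domain assigns a finite set of bounds to each ordered pair of
clocks in `C0 = C ∪ {0}`. -/
abbrev AbsDom (C : Type*) := Option C → Option C → Finset Bnd

/-- The symmetry requirement on abstract domains:
`𝒟_{y,x} = {(−k, ≺⁻¹) : (k, ≺) ∈ 𝒟_{x,y}}`. -/
def DomSym (𝒟 : AbsDom C) : Prop := ∀ x y, 𝒟 y x = (𝒟 x y).image bndInv

variable [LinearOrder (Option C)]

/-- The predicate set `P^𝒟`: one variable `p_{x−y≺k}` for each pair `x ⊏ y`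
(in the fixed total order on `C0`) and each bound `(k, ≺) ∈ 𝒟_{x,y}`. -/
abbrev Pred (𝒟 : AbsDom C) :=
  {p : Option C × Option C × Bnd // p.1 < p.2.1 ∧ p.2.2 ∈ 𝒟 p.1 p.2.1}

/-- A minterm: a Boolean valuation of the predicate set. -/
abbrev Minterm (𝒟 : AbsDom C) := Pred 𝒟 → Bool

/-- The semantics of a minterm: the set of (nonnegative) clock valuations
satisfying exactly the constraints prescribed by the minterm. -/
def mtSem (𝒟 : AbsDom C) (u : Minterm 𝒟) : Set (C → ℝ) :=
  {v | (∀ c, 0 ≤ v c) ∧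
    ∀ p : Pred 𝒟, (satB (val0 v p.1.1 - val0 v p.1.2.1) p.1.2.2 ↔ u p = true)}

/-- The semantics of a set of minterms. -/
def setSem (𝒟 : AbsDom C) (S : Set (Minterm 𝒟)) : Set (C → ℝ) :=
  ⋃ u ∈ S, mtSem 𝒟 u

/-- The abstraction function `α_𝒟` maps a set `Z` of valuations to the set of
minterms whose semantics meets `Z`. -/
def absF (𝒟 : AbsDom C) (Z : Set (C → ℝ)) : Set (Minterm 𝒟) :=
  {u | (mtSem 𝒟 u ∩ Z).Nonempty}

/-- The literal value `u⟦x−y≺k⟧`: the value of the predicate `p_{x−y≺k}` if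
`x ⊏ y`, and the negation of the value of `p_{y−x≺⁻¹−k}` if `y ⊏ x`
(if `x = y` the literal is the truth value of the constraint `0 ≺ k`). -/
def litVal (𝒟 : AbsDom C) (u : Minterm 𝒟) (x y : Option C) (b : Bnd) : Bool :=
  if h : x < y ∧ b ∈ 𝒟 x y then u ⟨(x, y, b), h⟩
  else if h : y < x ∧ bndInv b ∈ 𝒟 y x then !(u ⟨(y, x, bndInv b), h⟩)
  else decide ((0 : Bnd) ≤ b)

/-- A minterm is 2-reduced if no contradiction can be obtained from it via
paths of length at most 2: any constraint implied by a single stronger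
asserted constraint, or by the sum of two asserted constraints, is asserted. -/
def TwoReduced (𝒟 : AbsDom C) (u : Minterm 𝒟) : Prop :=
  ∀ x y : Option C, ∀ b ∈ 𝒟 x y,
    ((∃ b' ∈ 𝒟 x y, b' ≤ b ∧ litVal 𝒟 u x y b' = true) ∨
      (∃ z : Option C, ∃ b₁ ∈ 𝒟 x z, ∃ b₂ ∈ 𝒟 z y,
        b₁ + b₂ ≤ b ∧ litVal 𝒟 u x z b₁ = true ∧ litVal 𝒟 u z y b₂ = true)) →
    litVal 𝒟 u x y b = true

/-- The image of a set of valuations under resetting clock `z` to `0`. -/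
def resetSet {C : Type*} [DecidableEq C] (z : C) (S : Set (C → ℝ)) :
    Set (C → ℝ) :=
  {w | ∃ v ∈ S, w = Function.update v z 0}

/-- The abstract reset relation `S_Reset_z` on minterms. -/
def SReset {C : Type*} [LinearOrder (Option C)] (𝒟 : AbsDom C) (z : C)
    (u w : Minterm 𝒟) : Prop :=
  (∀ b ∈ 𝒟 (some z) none, (0 : Bnd) ≤ b →
      litVal 𝒟 w (some z) none b = true) ∧
  (∀ x : Option C, x ≠ some z → ∀ b ∈ 𝒟 x (some z),
      (∃ b' ∈ 𝒟 x none, b' ≤ b ∧ litVal 𝒟 u x none b' = true) →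
      litVal 𝒟 w x (some z) b = true) ∧
  (∀ y : Option C, y ≠ some z → ∀ b ∈ 𝒟 (some z) y,
      (∃ b' ∈ 𝒟 none y, b' ≤ b ∧ litVal 𝒟 u none y b' = true) →
      litVal 𝒟 w (some z) y b = true) ∧
  (∀ y : Option C, y ≠ some z → ∀ b ∈ 𝒟 (some z) y, (0 : Bnd) ≤ b →
      litVal 𝒟 w (some z) y b = true) ∧
  (∀ x y : Option C, x ≠ some z → y ≠ some z → ∀ b ∈ 𝒟 x y,
      litVal 𝒟 w x y b = litVal 𝒟 u x y b)

/-!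
If `v ∈ ⟦u⟧` and `v[z←0] ∈ ⟦w⟧`, every literal of `w` can be read off `v[z←0]`, whose value
at `z` is `0`. So `x − z ≺ k` for `w` is `x − 0 ≺ k` for `u`, implied by any stronger asserted
bound; symmetrically for `z − y ≺ k`; `z − 0 = 0` and `z − y = −y ≤ 0` satisfy every bound
`≥ (0,≤)`; and constraints avoiding `z` are unchanged. Reading literals semantically uses the
symmetry of `𝒟`: for `y ⊏ x` the literal `x − y ≺ k` negates the predicate `y − x ≺⁻¹ −k`.
-/

theorem satB_zero_iff (b : Bnd) : satB 0 b ↔ 0 ≤ b := by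
  obtain ⟨⟨k, s⟩, rfl⟩ := toLex.surjective b
  change _ ↔ toLex ((0 : ℤ), true) ≤ toLex (k, s)
  rw [Prod.Lex.toLex_le_toLex]
  cases s <;> simp [satB]
  omega

theorem satB_of_le {d : ℝ} {b b' : Bnd} (h : b' ≤ b) (hd : satB d b') : satB d b := by
  obtain ⟨⟨k, s⟩, rfl⟩ := toLex.surjective b
  obtain ⟨⟨k', s'⟩, rfl⟩ := toLex.surjective b'
  rcases Prod.Lex.toLex_le_toLex.mp h with hk | ⟨rfl, hs⟩
  · have hk : (k' : ℝ) + 1 ≤ k := by exact_mod_cast hk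
    cases s <;> cases s' <;> simp only [satB, ofLex_toLex, if_true, if_false, Bool.false_eq_true]
      at hd ⊢ <;> linarith
  · cases s <;> cases s' <;> simp_all [satB, Bool.le_iff_imp, le_of_lt]

theorem satB_of_le_of_satB {d d' : ℝ} {b : Bnd} (h : d ≤ d') (hd : satB d' b) : satB d b := by
  unfold satB at *
  split_ifs at hd ⊢ <;> linarith

theorem satB_iff_not_satB_bndInv (d : ℝ) (b : Bnd) : satB d b ↔ ¬ satB (-d) (bndInv b) := by
  unfold satB bndInv
  cases (ofLex b).2 <;> simp

theorem bndInv_mem_of_mem {C : Type*} {𝒟 : AbsDom C} (hsym : DomSym 𝒟) {x y : Option C}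
    {b : Bnd} (hb : b ∈ 𝒟 x y) : bndInv b ∈ 𝒟 y x :=
  hsym x y ▸ Finset.mem_image_of_mem _ hb

theorem litVal_eq_true_iff {C : Type*} [LinearOrder (Option C)] {𝒟 : AbsDom C}
    (hsym : DomSym 𝒟) {u : Minterm 𝒟} {v : C → ℝ} (hv : v ∈ mtSem 𝒟 u)
    {x y : Option C} {b : Bnd} (hb : b ∈ 𝒟 x y) :
    litVal 𝒟 u x y b = true ↔ satB (val0 v x - val0 v y) b := by
  rcases lt_trichotomy x y with hxy | rfl | hyx
  · rw [litVal, dif_pos ⟨hxy, hb⟩]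
    exact (hv.2 ⟨(x, y, b), hxy, hb⟩).symm
  · simp [litVal, satB_zero_iff]
  · have hinv := bndInv_mem_of_mem hsym hb
    rw [litVal, dif_neg (fun h => hyx.not_gt h.1), dif_pos ⟨hyx, hinv⟩,
      satB_iff_not_satB_bndInv, neg_sub, Bool.not_eq_true', ← Bool.not_eq_true,
      (hv.2 ⟨(y, x, bndInv b), hyx, hinv⟩).not]

theorem val0_update_self {C : Type*} [DecidableEq C] (v : C → ℝ) (z : C) (d : ℝ) :
    val0 (Function.update v z d) (some z) = d := by
  simp [val0]

theorem val0_update_of_ne {C : Type*} [DecidableEq C] (v : C → ℝ) {z : C} (d : ℝ)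
    {x : Option C} (hx : x ≠ some z) : val0 (Function.update v z d) x = val0 v x := by
  cases x with
  | none => rfl
  | some c => exact Function.update_of_ne (fun h => hx (congrArg some h)) d v

theorem val0_nonneg {C : Type*} {v : C → ℝ} (hv : ∀ c, 0 ≤ v c) (x : Option C) :
    0 ≤ val0 v x := by
  cases x with
  | none => exact le_rfl
  | some c => exact hv c

theorem sReset_of_mem_mtSem {C : Type*} [LinearOrder (Option C)] [DecidableEq C]
    {𝒟 : AbsDom C} (hsym : DomSym 𝒟) {z : C} {u w : Minterm 𝒟} {v : C → ℝ}
    (hu : v ∈ mtSem 𝒟 u) (hw : Function.update v z 0 ∈ mtSem 𝒟 w) : SReset 𝒟 z u w := by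
  set v' := Function.update v z 0
  have hz : val0 v' (some z) = 0 := val0_update_self v z 0
  have hne : ∀ x, x ≠ some z → val0 v' x = val0 v x := fun _ => val0_update_of_ne v 0
  have hnone : ∀ v : C → ℝ, val0 v none = 0 := fun _ => rfl
  refine ⟨fun b hb h0b => ?_, fun x hx b hb ⟨b', hb', hle, hx0⟩ => ?_,
    fun y hy b hb ⟨b', hb', hle, h0y⟩ => ?_, fun y hy b hb h0b => ?_,
    fun x y hx hy b hb => ?_⟩
  · rw [litVal_eq_true_iff hsym hw hb, hz, hnone, sub_self, satB_zero_iff]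
    exact h0b
  · rw [litVal_eq_true_iff hsym hu hb', hnone, sub_zero] at hx0
    rw [litVal_eq_true_iff hsym hw hb, hz, hne x hx, sub_zero]
    exact satB_of_le hle hx0
  · rw [litVal_eq_true_iff hsym hu hb', hnone] at h0y
    rw [litVal_eq_true_iff hsym hw hb, hz, hne y hy]
    exact satB_of_le hle h0y
  · rw [litVal_eq_true_iff hsym hw hb, hz]
    have hy0 : 0 - val0 v' y ≤ 0 := by linarith [val0_nonneg hw.1 y]
    exact satB_of_le_of_satB hy0 ((satB_zero_iff b).mpr h0b)
  · rw [Bool.eq_iff_iff, litVal_eq_true_iff hsym hw hb, litVal_eq_true_iff hsym hu hb,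
      hne x hx, hne y hy]

/-- The abstraction of `⟦A⟧[z ← 0]` is contained in the image of `A` under the
relation `S_Reset_z`. -/
theorem reset_abstraction_sound {C : Type*} [LinearOrder (Option C)]
    [DecidableEq C] (𝒟 : AbsDom C) (hsym : DomSym 𝒟) (z : C)
    (A : Set (Minterm 𝒟)) :
    absF 𝒟 (resetSet z (setSem 𝒟 A)) ⊆ {w | ∃ u ∈ A, SReset 𝒟 z u w} := by
  rintro w ⟨_, hw, v, hv, rfl⟩
  obtain ⟨u, hu, hvu⟩ := Set.mem_iUnion₂.mp hv
  exact ⟨u, hu, sReset_of_mem_mtSem hsym hvu hw⟩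
end
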